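/- arXiv:0812.2300 — 4 statements merged into one kernel-verified Lean document; each statement's English description precedes it below -/
import Mathlib

section
/- Let P be a join-semilattice. The following are equivalent: (i) there exists a poset Q and an embedding of P into I_{<ω}(Q) as a join-subsemilattice; (ii) P embeds into I_{<ω}(J(P)) as a join-subsemilattice, where J(P) is ordered by inclusion; (iii) P embeds into I_{<ω}(Δ(J(P))) as a join-subsemilattice, where Δ(J(P)) is ordered by inclusion; (iv) for every x ∈ P, the set {y ∈ P : x ≰ y} is a union of finitely many (possibly zero) ideals of P. -/
/-!
A join-embedding `f` of `P` into sets reflects the order, so `{y | ¬ x ≤ y}` is covered by the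
sets `{y | q ∉ f y}` with `q` among the finitely many generators of `f x`; the nonempty ones are
ideals. Conversely, if each `{y | ¬ x ≤ y}` is a finite union of ideals, then `p ↦ {I | p ∉ I}`
is a join-embedding into finitely generated initial segments of ideals: an ideal avoiding `p` is
a directed set inside a finite union of lower sets, hence inside one of them. For `Δ(J(P))`,
enlarge each covering ideal to an ideal maximal among those avoiding `p`; such an ideal `M` is
completely meet-irreducible, its cover being `JoinUp p M`.
-/

open Set

/-- The poset `Ω(ω*)`: pairs `(i,j)` of naturals with `i < j`,
ordered by `(i,j) ≤ (i',j')` iff `i' ≤ i ∧ j ≤ j'`. We only need the carrier and the join. -/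
abbrev OmegaStar : Type := {p : ℕ × ℕ // p.1 < p.2}

/-- The join in `Ω(ω*)`: `(i,j) ⊔ (i',j') = (min i i', max j j')`. -/
def omegaJoin (a b : OmegaStar) : OmegaStar :=
  ⟨(min a.1.1 b.1.1, max a.1.2 b.1.2),
    lt_of_le_of_lt (min_le_left _ _) (lt_of_lt_of_le a.2 (le_max_left _ _))⟩

/-- `Ω̲(ω*)`: `Ω(ω*)` with a new least element (`none`) adjoined. -/
abbrev OmegaStarBot : Type := Option OmegaStar

/-- The join in `Ω̲(ω*)`. -/
def omegaBotJoin : OmegaStarBot → OmegaStarBot → OmegaStarBot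
  | none, b => b
  | a, none => a
  | some a, some b => some (omegaJoin a b)

/-- `I_{<ω}(Q)`: the finitely generated initial segments of `Q`,
i.e. downward closures of finite subsets of `Q` (including `∅`). -/
def FinGenInit (Q : Type*) [Preorder Q] : Set (Set Q) :=
  {S | ∃ F : Finset Q, S = {x | ∃ y ∈ F, x ≤ y}}

/-- An ideal of a poset: a nonempty, up-directed, downward closed subset. -/
def IsIdeal {P : Type*} [Preorder P] (I : Set P) : Prop :=
  I.Nonempty ∧ (∀ x ∈ I, ∀ y ∈ I, ∃ z ∈ I, x ≤ z ∧ y ≤ z) ∧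
    ∀ x y : P, x ≤ y → y ∈ I → x ∈ I

/-- A completely meet-irreducible ideal: an ideal `I` for which there is an ideal `J ⊋ I`
contained in every ideal strictly containing `I`. -/
def CMIdeal {P : Type*} [Preorder P] (I : Set P) : Prop :=
  IsIdeal I ∧ ∃ J : Set P, IsIdeal J ∧ I ⊂ J ∧ ∀ K : Set P, IsIdeal K → I ⊂ K → J ⊆ K

/-- An ideal of a sub-poset `P` of `α`: a subset of `P`, nonempty, up-directed,
downward closed within `P`. -/
def IsIdealIn {α : Type*} [Preorder α] (P I : Set α) : Prop :=
  I ⊆ P ∧ I.Nonempty ∧ (∀ x ∈ I, ∀ y ∈ I, ∃ z ∈ I, x ≤ z ∧ y ≤ z) ∧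
    ∀ x ∈ P, ∀ y ∈ I, x ≤ y → x ∈ I

/-- A completely meet-irreducible ideal of the sub-poset `P`. -/
def CMIdealIn {α : Type*} [Preorder α] (P I : Set α) : Prop :=
  IsIdealIn P I ∧ ∃ J : Set α, IsIdealIn P J ∧ I ⊂ J ∧
    ∀ K : Set α, IsIdealIn P K → I ⊂ K → J ⊆ K

/-- `{x} ∨ J`, the ideal `{z : z ≤ x ⊔ y for some y ∈ J}`. -/
def JoinUp {P : Type*} [SemilatticeSup P] (x : P) (J : Set P) : Set P :=
  {z | ∃ y ∈ J, z ≤ x ⊔ y}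

/-- A nonempty chain `𝓘` of ideals is separating if for every `I ∈ 𝓘` with `I ≠ ⋃𝓘` and every
`x ∈ ⋃𝓘 \ I` there is `J ∈ 𝓘` with `I ⊄ {x} ∨ J`. -/
def Separating {P : Type*} [SemilatticeSup P] (𝓘 : Set (Set P)) : Prop :=
  ∀ I ∈ 𝓘, I ≠ ⋃₀ 𝓘 → ∀ x ∈ (⋃₀ 𝓘) \ I, ∃ J ∈ 𝓘, ¬ I ⊆ JoinUp x J

/-- An independent subset of a join-semilattice: no member is below the join of finitely many
of the others. -/
def IndepSet {P : Type*} [SemilatticeSup P] (X : Set P) : Prop :=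
  ∀ x ∈ X, ∀ F : Finset P, ∀ hF : F.Nonempty, ↑F ⊆ X \ {x} → ¬ x ≤ F.sup' hF id

/-- `ℱ^{<ω}`: unions of finite subfamilies of `ℱ` (including `∅`). -/
def finUnions {α : Type*} (ℱ : Set (Set α)) : Set (Set α) :=
  {S | ∃ G : Finset (Set α), ↑G ⊆ ℱ ∧ S = ⋃₀ ↑G}

/-- `ℱ^∪`: unions of arbitrary subfamilies of `ℱ`. -/
def arbUnions {α : Type*} (ℱ : Set (Set α)) : Set (Set α) :=
  {S | ∃ G ⊆ ℱ, S = ⋃₀ G}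

universe u

section Ideals

variable {P : Type*}

section Preorder

variable [Preorder P]

lemma isIdeal_Iic (y : P) : IsIdeal (Iic y) :=
  ⟨⟨y, le_rfl⟩, fun _ _ _ _ => ⟨y, le_rfl, ‹_›, ‹_›⟩, fun _ _ hab hb => hab.trans hb⟩

lemma IsIdeal.isLowerSet {I : Set P} (hI : IsIdeal I) : IsLowerSet I :=
  fun _ _ hba ha => hI.2.2 _ _ hba ha

lemma IsIdeal.exists_subset_of_subset_sUnion {I : Set P} (hI : IsIdeal I) {G : Finset (Set P)}
    (hG : ∀ J ∈ G, IsLowerSet J) (h : I ⊆ ⋃₀ ↑G) : ∃ J ∈ G, I ⊆ J := by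
  classical
  induction G using Finset.induction_on with
  | empty =>
    obtain ⟨x, hx⟩ := hI.1
    simpa using h hx
  | insert J G _ ih =>
    by_cases hIJ : I ⊆ J
    · exact ⟨J, Finset.mem_insert_self _ _, hIJ⟩
    obtain ⟨a, haI, haJ⟩ := not_subset.1 hIJ
    -- every `y ∈ I` lies below some `z ∈ I` above `a`, and such `z` is not in `J`
    have hIG : I ⊆ ⋃₀ ↑G := by
      intro y hy
      obtain ⟨z, hz, haz, hyz⟩ := hI.2.1 a haI y hy
      obtain ⟨K, hK, hzK⟩ := h hz
      rcases Finset.mem_insert.1 hK with rfl | hK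
      · exact absurd (hG K (Finset.mem_insert_self _ _) haz hzK) haJ
      · exact ⟨K, hK, hG K (Finset.mem_insert_of_mem hK) hyz hzK⟩
    obtain ⟨K, hK, hIK⟩ := ih (fun K hK => hG K (Finset.mem_insert_of_mem hK)) hIG
    exact ⟨K, Finset.mem_insert_of_mem hK, hIK⟩

lemma isIdeal_sUnion_of_isChain {c : Set (Set P)} (hc : ∀ I ∈ c, IsIdeal I)
    (hchain : IsChain (· ⊆ ·) c) (hne : c.Nonempty) : IsIdeal (⋃₀ c) := by
  obtain ⟨I₀, hI₀⟩ := hne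
  refine ⟨(hc I₀ hI₀).1.mono (subset_sUnion_of_mem hI₀), ?_, ?_⟩
  · rintro a ⟨I, hI, haI⟩ b ⟨J, hJ, hbJ⟩
    obtain ⟨K, hK, haK, hbK⟩ : ∃ K ∈ c, a ∈ K ∧ b ∈ K := by
      rcases hchain.total hI hJ with h | h
      exacts [⟨J, hJ, h haI, hbJ⟩, ⟨I, hI, haI, h hbJ⟩]
    obtain ⟨z, hz, haz, hbz⟩ := (hc K hK).2.1 a haK b hbK
    exact ⟨z, ⟨K, hK, hz⟩, haz, hbz⟩
  · rintro a b hab ⟨I, hI, hbI⟩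
    exact ⟨I, hI, (hc I hI).2.2 a b hab hbI⟩

lemma IsIdeal.exists_maximal_superset_notMem {I : Set P} (hI : IsIdeal I) {x : P}
    (hx : x ∉ I) : ∃ M, I ⊆ M ∧ Maximal (fun J => IsIdeal J ∧ x ∉ J) M := by
  refine zorn_subset_nonempty {J | IsIdeal J ∧ x ∉ J} ?_ I ⟨hI, hx⟩
  intro c hc hchain hne
  refine ⟨⋃₀ c, ⟨isIdeal_sUnion_of_isChain (fun J hJ => (hc hJ).1) hchain hne, ?_⟩,
    fun _ => subset_sUnion_of_mem⟩
  rintro ⟨J, hJ, hxJ⟩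
  exact (hc hJ).2 hxJ

end Preorder

variable [SemilatticeSup P]

lemma IsIdeal.sup_mem_iff {I : Set P} (hI : IsIdeal I) {a b : P} :
    a ⊔ b ∈ I ↔ a ∈ I ∧ b ∈ I := by
  refine ⟨fun h => ⟨hI.2.2 a _ le_sup_left h, hI.2.2 b _ le_sup_right h⟩, ?_⟩
  rintro ⟨ha, hb⟩
  obtain ⟨z, hz, haz, hbz⟩ := hI.2.1 a ha b hb
  exact hI.2.2 _ z (sup_le haz hbz) hz

lemma IsIdeal.joinUp {J : Set P} (hJ : IsIdeal J) (x : P) : IsIdeal (JoinUp x J) := by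
  obtain ⟨y₀, hy₀⟩ := hJ.1
  refine ⟨⟨x, y₀, hy₀, le_sup_left⟩, ?_, ?_⟩
  · rintro a ⟨y, hy, hay⟩ b ⟨y', hy', hby⟩
    obtain ⟨z, hz, hyz, hy'z⟩ := hJ.2.1 y hy y' hy'
    exact ⟨x ⊔ z, ⟨z, hz, le_rfl⟩, hay.trans (sup_le_sup_left hyz x),
      hby.trans (sup_le_sup_left hy'z x)⟩
  · rintro a b hab ⟨y, hy, hby⟩
    exact ⟨y, hy, hab.trans hby⟩

lemma cmIdeal_of_maximal_notMem {M : Set P} {x : P}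
    (hM : Maximal (fun J => IsIdeal J ∧ x ∉ J) M) : CMIdeal M := by
  obtain ⟨⟨hMideal, hxM⟩, hmax⟩ := hM
  obtain ⟨y₀, hy₀⟩ := hMideal.1
  have hxJ : x ∈ JoinUp x M := ⟨y₀, hy₀, le_sup_left⟩
  refine ⟨hMideal, JoinUp x M, hMideal.joinUp x,
    ⟨fun y hy => ⟨y, hy, le_sup_right⟩, fun h => hxM (h hxJ)⟩, fun K hK hMK => ?_⟩
  have hxK : x ∈ K := by
    by_contra hxK
    exact hMK.2 (hmax ⟨hK, hxK⟩ hMK.1)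
  rintro z ⟨y, hy, hz⟩
  obtain ⟨w, hw, hxw, hyw⟩ := hK.2.1 x hxK y (hMK.1 hy)
  exact hK.2.2 z w (hz.trans (sup_le hxw hyw)) hw

lemma IsIdeal.exists_cmIdeal_superset_notMem {I : Set P} (hI : IsIdeal I) {x : P}
    (hx : x ∉ I) : ∃ J, CMIdeal J ∧ I ⊆ J ∧ x ∉ J := by
  obtain ⟨M, hIM, hM⟩ := hI.exists_maximal_superset_notMem hx
  exact ⟨M, cmIdeal_of_maximal_notMem hM, hIM, hM.1.2⟩

end Ideals

lemma mem_finGenInit_of_finite {Q : Type*} [Preorder Q] {S F : Set Q} (hF : F.Finite)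
    (hS : S = {x | ∃ y ∈ F, x ≤ y}) : S ∈ FinGenInit Q :=
  ⟨hF.toFinset, by simpa using hS⟩

lemma isLowerSet_of_mem_finGenInit {Q : Type*} [Preorder Q] {S : Set Q}
    (hS : S ∈ FinGenInit Q) : IsLowerSet S := by
  obtain ⟨F, rfl⟩ := hS
  rintro a b hba ⟨y, hy, hay⟩
  exact ⟨y, hy, hba.trans hay⟩

def IsFinIdealUnion {P : Type*} [Preorder P] (S : Set P) : Prop :=
  ∃ 𝓖 : Finset (Set P), (∀ I ∈ 𝓖, IsIdeal I) ∧ S = ⋃₀ ↑𝓖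

def IsFinGenInitJoinEmbedding {P Q : Type*} [SemilatticeSup P] [Preorder Q] (f : P → Set Q) :
    Prop :=
  (∀ p, f p ∈ FinGenInit Q) ∧ Function.Injective f ∧ ∀ a b, f (a ⊔ b) = f a ∪ f b

section JoinEmbedding

variable {P α : Type*} [SemilatticeSup P] {f : P → Set α}

lemma monotone_of_map_sup (hf : ∀ a b, f (a ⊔ b) = f a ∪ f b) : Monotone f := by
  intro a b hab
  rw [← sup_eq_right.mpr hab, hf]
  exact subset_union_left

lemma le_of_subset_of_map_sup (hinj : Function.Injective f)
    (hf : ∀ a b, f (a ⊔ b) = f a ∪ f b) {a b : P} (h : f a ⊆ f b) : a ≤ b :=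
  sup_eq_right.mp (hinj (by rw [hf, union_eq_self_of_subset_left h]))

lemma isIdeal_setOf_notMem_of_map_sup (hf : ∀ a b, f (a ⊔ b) = f a ∪ f b) (q : α)
    (hne : {y | q ∉ f y}.Nonempty) : IsIdeal {y | q ∉ f y} := by
  refine ⟨hne, fun a ha b hb => ⟨a ⊔ b, ?_, le_sup_left, le_sup_right⟩,
    fun a b hab hb ha => hb (monotone_of_map_sup hf hab ha)⟩
  rw [mem_ofPred_eq, hf]
  rintro (h | h)
  exacts [ha h, hb h]

lemma IsFinGenInitJoinEmbedding.isFinIdealUnion {Q : Type*} [Preorder Q] {f : P → Set Q}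
    (hf : IsFinGenInitJoinEmbedding f) (x : P) : IsFinIdealUnion {y | ¬ x ≤ y} := by
  classical
  obtain ⟨hFG, hinj, hsup⟩ := hf
  obtain ⟨F, hF⟩ := hFG x
  refine ⟨(F.image fun q => {y | q ∉ f y}).filter (·.Nonempty), ?_, ?_⟩
  · intro I hI
    obtain ⟨hI, hne⟩ := Finset.mem_filter.1 hI
    obtain ⟨q, -, rfl⟩ := Finset.mem_image.1 hI
    exact isIdeal_setOf_notMem_of_map_sup hsup q hne
  · ext y
    simp only [mem_ofPred_eq, mem_sUnion, Finset.coe_filter, Finset.mem_image]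
    constructor
    · intro hxy
      obtain ⟨z, hzx, hzy⟩ := not_subset.1 (mt (le_of_subset_of_map_sup hinj hsup) hxy)
      rw [hF] at hzx
      obtain ⟨q, hqF, hzq⟩ := hzx
      have hqy : q ∉ f y := fun h => hzy (isLowerSet_of_mem_finGenInit (hFG y) hzq h)
      exact ⟨_, ⟨⟨q, hqF, rfl⟩, y, hqy⟩, hqy⟩
    · rintro ⟨_, ⟨⟨q, hqF, rfl⟩, -⟩, hqy⟩ hxy
      have hqx : q ∈ f x := by rw [hF]; exact ⟨q, hqF, le_rfl⟩
      exact hqy (monotone_of_map_sup hsup hxy hqx)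

end JoinEmbedding

section IdealsAvoiding

variable {P : Type*} [SemilatticeSup P] {C : Set P → Prop}

def idealsAvoiding (C : Set P → Prop) (p : P) : Set {I : Set P // C I} :=
  {I | p ∉ I.1}

lemma idealsAvoiding_sup (hC : ∀ I, C I → IsIdeal I) (a b : P) :
    idealsAvoiding C (a ⊔ b) = idealsAvoiding C a ∪ idealsAvoiding C b := by
  ext I
  simp only [idealsAvoiding, mem_ofPred_eq, mem_union, (hC I.1 I.2).sup_mem_iff]
  tauto

lemma idealsAvoiding_injective (hext : ∀ I, IsIdeal I → ∀ x ∉ I, ∃ J, C J ∧ I ⊆ J ∧ x ∉ J) :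
    Function.Injective (idealsAvoiding C) := by
  have hle : ∀ a b : P, idealsAvoiding C a ⊆ idealsAvoiding C b → a ≤ b := by
    intro a b h
    by_contra hab
    obtain ⟨J, hJ, hbJ, haJ⟩ := hext (Iic b) (isIdeal_Iic b) a hab
    exact h (show ⟨J, hJ⟩ ∈ idealsAvoiding C a from haJ) (hbJ le_rfl)
  exact fun a b h => le_antisymm (hle a b h.le) (hle b a h.ge)

lemma idealsAvoiding_mem_finGenInit (hC : ∀ I, C I → IsIdeal I)
    (hext : ∀ I, IsIdeal I → ∀ x ∉ I, ∃ J, C J ∧ I ⊆ J ∧ x ∉ J) {p : P}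
    (hp : IsFinIdealUnion {y | ¬ p ≤ y}) :
    idealsAvoiding C p ∈ FinGenInit {I : Set P // C I} := by
  classical
  obtain ⟨𝓖, h𝓖, hcover⟩ := hp
  have hp𝓖 : ∀ G ∈ 𝓖, p ∉ G := fun G hG hpG =>
    (hcover ▸ mem_sUnion_of_mem hpG hG : p ∈ {y | ¬ p ≤ y}) le_rfl
  choose J hJ hGJ hpJ using fun G : 𝓖 => hext G.1 (h𝓖 G.1 G.2) p (hp𝓖 G.1 G.2)
  refine mem_finGenInit_of_finite (finite_range fun G => (⟨J G, hJ G⟩ : {I // C I})) ?_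
  ext I
  simp only [idealsAvoiding, mem_ofPred_eq, exists_range_iff]
  constructor
  · intro hpI
    have hI𝓖 : I.1 ⊆ ⋃₀ ↑(𝓖.attach.image J) := by
      intro y hy
      have hpy : ¬ p ≤ y := fun h => hpI ((hC I.1 I.2).2.2 p y h hy)
      obtain ⟨G, hG, hyG⟩ := (hcover ▸ hpy : y ∈ ⋃₀ ↑𝓖)
      exact ⟨J ⟨G, hG⟩, by simp, hGJ ⟨G, hG⟩ hyG⟩
    obtain ⟨K, hK, hIK⟩ := (hC I.1 I.2).exists_subset_of_subset_sUnion
      (fun K hK => by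
        obtain ⟨G, -, rfl⟩ := Finset.mem_image.1 hK
        exact (hC _ (hJ G)).isLowerSet) hI𝓖
    obtain ⟨G, -, rfl⟩ := Finset.mem_image.1 hK
    exact ⟨G, hIK⟩
  · rintro ⟨G, hIG⟩ hpI
    exact hpJ G (hIG hpI)

lemma isFinGenInitJoinEmbedding_idealsAvoiding (hC : ∀ I, C I → IsIdeal I)
    (hext : ∀ I, IsIdeal I → ∀ x ∉ I, ∃ J, C J ∧ I ⊆ J ∧ x ∉ J)
    (hP : ∀ x : P, IsFinIdealUnion {y | ¬ x ≤ y}) :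
    IsFinGenInitJoinEmbedding (idealsAvoiding C) :=
  ⟨fun _ => idealsAvoiding_mem_finGenInit hC hext (hP _), idealsAvoiding_injective hext,
    idealsAvoiding_sup hC⟩

end IdealsAvoiding

/-- For a join-semilattice `P` the following are equivalent: (i) `P` embeds into
`I_{<ω}(Q)` as a join-subsemilattice for some poset `Q`; (ii) `P` embeds into `I_{<ω}(J(P))`;
(iii) `P` embeds into `I_{<ω}(Δ(J(P)))`; (iv) for every `x ∈ P`, `P \ ↑x` is a finite union of
ideals. -/
theorem embeds_finGenInit_tfae {P : Type u} [SemilatticeSup P] :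
    List.TFAE [
      ∃ (Q : Type u) (_ : PartialOrder Q), ∃ f : P → Set Q,
        (∀ p, f p ∈ FinGenInit Q) ∧ Function.Injective f ∧
          ∀ a b, f (a ⊔ b) = f a ∪ f b,
      ∃ f : P → Set {I : Set P // IsIdeal I},
        (∀ p, f p ∈ FinGenInit {I : Set P // IsIdeal I}) ∧ Function.Injective f ∧
          ∀ a b, f (a ⊔ b) = f a ∪ f b,
      ∃ f : P → Set {I : Set P // CMIdeal I},
        (∀ p, f p ∈ FinGenInit {I : Set P // CMIdeal I}) ∧ Function.Injective f ∧
          ∀ a b, f (a ⊔ b) = f a ∪ f b,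
      ∀ x : P, ∃ 𝓖 : Finset (Set P), (∀ I ∈ 𝓖, IsIdeal I) ∧
        {y : P | ¬ x ≤ y} = ⋃₀ ↑𝓖] := by
  tfae_have 1 → 4 := fun ⟨_, _, _, hf⟩ => IsFinGenInitJoinEmbedding.isFinIdealUnion hf
  tfae_have 4 → 2 := fun hP => ⟨_, isFinGenInitJoinEmbedding_idealsAvoiding (fun _ => id)
    (fun I hI _ hx => ⟨I, hI, subset_rfl, hx⟩) hP⟩
  tfae_have 4 → 3 := fun hP => ⟨_, isFinGenInitJoinEmbedding_idealsAvoiding (fun _ => And.left)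
    (fun _ hI _ => hI.exists_cmIdeal_superset_notMem) hP⟩
  tfae_have 2 → 1 := fun ⟨f, hf⟩ => ⟨_, inferInstance, f, hf⟩
  tfae_have 3 → 1 := fun ⟨f, hf⟩ => ⟨_, inferInstance, f, hf⟩
  tfae_finish
end

section
/- Let Q be the set ℕ × {0,1} with the partial order in which (m,i) < (n,j) holds if and only if m > n (in the natural order on ℕ) and i < j. Then Q is well-founded, and there exists a subset P of I_{<ω}(Q) closed under binary union (a join-subsemilattice of I_{<ω}(Q)) such that Δ(J(P)), ordered by inclusion, is not well-founded: it contains a strictly decreasing infinite sequence of completely meet-irreducible ideals. -/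
open Set

/-- The set `ℕ × {0,1}`. -/
def QT : Type := ℕ × Bool

/-- The order on `ℕ × {0,1}` in which `(m,i) < (n,j)` iff `m > n` and `i < j`. -/
instance : PartialOrder QT where
  le a b := a = b ∨ ((b : ℕ × Bool).1 < (a : ℕ × Bool).1 ∧
    (a : ℕ × Bool).2 = false ∧ (b : ℕ × Bool).2 = true)
  le_refl a := Or.inl rfl
  le_trans a b c hab hbc := by
    rcases hab with rfl | hab
    · exact hbc
    · rcases hbc with rfl | hbc
      · exact Or.inr hab
      · exact Or.inr ⟨lt_trans hbc.1 hab.1, hab.2.1, hbc.2.2⟩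
  le_antisymm a b hab hba := by
    rcases hab with rfl | hab
    · rfl
    · rcases hba with rfl | hba
      · rfl
      · exact absurd (lt_trans hab.1 hba.1) (lt_irrefl _)

/-!
In the family `P` of segments `seg i S = {(s,1) : s ∈ S} ∪ {(m,0) : m ≥ i}` (with `S` finite,
nonempty and `i ≤ min S`) one has `seg i S ⊆ seg i' S' ↔ S ⊆ S' ∧ i' ≤ i`, and `P` is closed
under unions. The ideal `I_n = {seg i S ∈ P : i > n}` is completely meet-irreducible: an ideal
`K ⊋ I_n` contains some `seg i S` with `i ≤ n`, and an upper bound in `K` of it and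
`seg (n+1) R ∈ I_n` lies above `seg i' R` for every `i' ≥ n`, so `K` contains the ideal
`{seg i S ∈ P : i ≥ n, min S > n} ⊋ I_n`. Hence `I_0 ⊋ I_1 ⊋ ⋯` in `Δ(J(P))`, while `Q` is
well-founded because its strict chains have length at most one.
-/

theorem cmIdealIn_of_ssubset {α : Type*} [Preorder α] {P I J : Set α}
    (hI : IsIdealIn P I) (hJ : IsIdealIn P J) (hIJ : I ⊂ J)
    (h : ∀ x ∈ P \ I, ∀ y ∈ J, ∃ z ∈ I, ∀ w ∈ P, x ≤ w → z ≤ w → y ≤ w) :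
    CMIdealIn P I := by
  refine ⟨hI, J, hJ, hIJ, fun K hK hIK y hy => ?_⟩
  obtain ⟨x, hxK, hxI⟩ := exists_of_ssubset hIK
  obtain ⟨z, hzI, hz⟩ := h x ⟨hK.1 hxK, hxI⟩ y hy
  obtain ⟨w, hwK, hxw, hzw⟩ := hK.2.2.1 x hxK z (hIK.subset hzI)
  exact hK.2.2.2 y (hJ.1 hy) w hwK (hz w (hK.1 hwK) hxw hzw)

namespace QT

instance : DecidableEq QT := inferInstanceAs (DecidableEq (ℕ × Bool))

theorem lt_iff (a b : QT) : a < b ↔ ((b : ℕ × Bool).1 < (a : ℕ × Bool).1 ∧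
    (a : ℕ × Bool).2 = false ∧ (b : ℕ × Bool).2 = true) := by
  refine ⟨fun h => (h.le.resolve_left h.ne), fun h => lt_of_le_of_ne (Or.inr h) ?_⟩
  rintro rfl
  exact lt_irrefl _ h.1

theorem isMin_of_lt {a b : QT} (h : a < b) : IsMin a := by
  intro c hca
  rcases hca with rfl | hca
  · exact le_rfl
  · exact absurd ((lt_iff a b).1 h).2.1 (by simp [hca.2.2])

theorem wellFounded_lt : WellFounded ((· < ·) : QT → QT → Prop) :=
  ⟨fun _ => ⟨_, fun _ hb => ⟨_, fun _ hc => absurd hc (isMin_of_lt hb).not_lt⟩⟩⟩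

def seg (i : ℕ) (S : Finset ℕ) : Set QT :=
  {q | ((q : ℕ × Bool).2 = true ∧ (q : ℕ × Bool).1 ∈ S) ∨
       ((q : ℕ × Bool).2 = false ∧ i ≤ (q : ℕ × Bool).1)}

theorem mem_seg {i : ℕ} {S : Finset ℕ} {q : QT} :
    q ∈ seg i S ↔ ((q : ℕ × Bool).2 = true ∧ (q : ℕ × Bool).1 ∈ S) ∨
      ((q : ℕ × Bool).2 = false ∧ i ≤ (q : ℕ × Bool).1) :=
  Iff.rfl

theorem seg_subset_seg_iff {i i' : ℕ} {S S' : Finset ℕ} :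
    seg i S ⊆ seg i' S' ↔ S ⊆ S' ∧ i' ≤ i := by
  refine ⟨fun h => ⟨fun n hn => ?_, ?_⟩, fun ⟨hS, hi⟩ q hq => ?_⟩
  · rcases h (Or.inl ⟨rfl, hn⟩ : ((n, true) : ℕ × Bool) ∈ seg i S) with ⟨-, h⟩ | ⟨h, -⟩
    exacts [h, Bool.noConfusion h]
  · rcases h (Or.inr ⟨rfl, le_rfl⟩ : ((i, false) : ℕ × Bool) ∈ seg i S) with ⟨h, -⟩ | ⟨-, h⟩
    exacts [Bool.noConfusion h, h]
  · rcases hq with ⟨h1, h2⟩ | ⟨h1, h2⟩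
    · exact Or.inl ⟨h1, hS h2⟩
    · exact Or.inr ⟨h1, hi.trans h2⟩

theorem seg_union_seg (i i' : ℕ) (S S' : Finset ℕ) :
    seg i S ∪ seg i' S' = seg (min i i') (S ∪ S') := by
  ext q
  simp only [Set.mem_union, mem_seg, Finset.mem_union, min_le_iff]
  tauto

theorem seg_mem_finGenInit {i : ℕ} {S : Finset ℕ} (hS : S.Nonempty) (hiS : ∀ m ∈ S, i ≤ m) :
    seg i S ∈ FinGenInit QT := by
  obtain ⟨s₀, hs₀⟩ := hS
  -- `(m,0)` with `m > s₀` lies below `(s₀,1)`, so finitely many generators suffice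
  refine ⟨S.image (β := QT) (fun s => (s, true)) ∪
    (Finset.Icc i s₀).image (β := QT) (fun m => (m, false)), ?_⟩
  ext q
  simp only [Set.mem_ofPred_eq]
  constructor
  · rintro (⟨hq, hqS⟩ | ⟨hq, hiq⟩)
    · exact ⟨q, Finset.mem_union_left _ (Finset.mem_image.2 ⟨_, hqS, Prod.ext rfl hq.symm⟩),
        le_rfl⟩
    · rcases le_or_gt (q : ℕ × Bool).1 s₀ with hqs | hsq
      · exact ⟨q, Finset.mem_union_right _
          (Finset.mem_image.2 ⟨_, Finset.mem_Icc.2 ⟨hiq, hqs⟩, Prod.ext rfl hq.symm⟩), le_rfl⟩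
      · exact ⟨_, Finset.mem_union_left _ (Finset.mem_image_of_mem _ hs₀), Or.inr ⟨hsq, hq, rfl⟩⟩
  · rintro ⟨y, hy, hqy⟩
    rcases Finset.mem_union.1 hy with hy | hy
    · obtain ⟨s, hs, rfl⟩ := Finset.mem_image.1 hy
      rcases hqy with rfl | ⟨hlt, hq, -⟩
      · exact Or.inl ⟨rfl, hs⟩
      · exact Or.inr ⟨hq, (hiS s hs).trans hlt.le⟩
    · obtain ⟨m, hm, rfl⟩ := Finset.mem_image.1 hy
      rcases hqy with rfl | ⟨-, -, hy⟩
      · exact Or.inr ⟨rfl, (Finset.mem_Icc.1 hm).1⟩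
      · exact Bool.noConfusion hy

def segs (a b : ℕ) : Set (Set QT) :=
  {X | ∃ (i : ℕ) (S : Finset ℕ), S.Nonempty ∧ a ≤ i ∧ (∀ m ∈ S, i ≤ m ∧ b ≤ m) ∧ seg i S = X}

theorem segs_subset_finGenInit (a b : ℕ) : segs a b ⊆ FinGenInit QT := by
  rintro _ ⟨i, S, hS, -, hiS, rfl⟩
  exact seg_mem_finGenInit hS fun m hm => (hiS m hm).1

theorem segs_anti {a a' b b' : ℕ} (ha : a ≤ a') (hb : b ≤ b') : segs a' b' ⊆ segs a b := by
  rintro _ ⟨i, S, hS, hai, hiS, rfl⟩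
  exact ⟨i, S, hS, ha.trans hai, fun m hm => ⟨(hiS m hm).1, hb.trans (hiS m hm).2⟩, rfl⟩

theorem le_of_seg_mem_segs {a b i : ℕ} {S : Finset ℕ} (h : seg i S ∈ segs a b) : a ≤ i := by
  obtain ⟨i', S', -, hai', -, hseg⟩ := h
  exact hai'.trans (seg_subset_seg_iff.1 hseg.ge).2

theorem union_mem_segs {a b : ℕ} {X Y : Set QT} (hX : X ∈ segs a b) (hY : Y ∈ segs a b) :
    X ∪ Y ∈ segs a b := by
  obtain ⟨i, S, ⟨s, hs⟩, hai, hiS, rfl⟩ := hX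
  obtain ⟨i', S', -, hai', hiS', rfl⟩ := hY
  refine ⟨min i i', S ∪ S', ⟨s, Finset.mem_union_left _ hs⟩, le_min hai hai', fun m hm => ?_,
    (seg_union_seg i i' S S').symm⟩
  rcases Finset.mem_union.1 hm with hm | hm
  · exact ⟨min_le_of_left_le (hiS m hm).1, (hiS m hm).2⟩
  · exact ⟨min_le_of_right_le (hiS' m hm).1, (hiS' m hm).2⟩

theorem segs_ssubset {a a' b b' : ℕ} (ha : a < a') (hb : b ≤ b') (hab : a ≤ b) :
    segs a' b' ⊂ segs a b := by
  refine (Set.ssubset_iff_of_subset (segs_anti ha.le hb)).2 ⟨seg a {b}, ?_, fun h => ?_⟩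
  · exact ⟨a, {b}, Finset.singleton_nonempty b, le_rfl, by simpa using hab, rfl⟩
  · exact ha.not_ge (le_of_seg_mem_segs h)

theorem isIdealIn_segs {a b : ℕ} (hab : a ≤ b) : IsIdealIn (segs 0 0) (segs a b) := by
  refine ⟨segs_anti a.zero_le b.zero_le, ?_, fun X hX Y hY => ?_, ?_⟩
  · exact ⟨seg b {b}, b, {b}, Finset.singleton_nonempty b, hab, by simp, rfl⟩
  · exact ⟨X ∪ Y, union_mem_segs hX hY, Set.subset_union_left, Set.subset_union_right⟩
  · rintro _ ⟨i, S, hS, -, hiS, rfl⟩ _ ⟨i', S', -, hai', hiS', rfl⟩ hle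
    obtain ⟨hSS', hii'⟩ := seg_subset_seg_iff.1 hle
    exact ⟨i, S, hS, hai'.trans hii', fun m hm => ⟨(hiS m hm).1, (hiS' m (hSS' hm)).2⟩, rfl⟩

theorem cmIdealIn_segs_succ (n : ℕ) : CMIdealIn (segs 0 0) (segs (n + 1) (n + 1)) := by
  refine cmIdealIn_of_ssubset (isIdealIn_segs le_rfl) (isIdealIn_segs n.le_succ)
    (segs_ssubset n.lt_succ_self le_rfl n.le_succ) ?_
  rintro _ ⟨⟨i, S, hS, -, hiS, rfl⟩, hx⟩ _ ⟨i', R, hR, hni', hR', rfl⟩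
  have hin : i ≤ n := by
    by_contra! hni
    exact hx ⟨i, S, hS, hni, fun m hm => ⟨(hiS m hm).1, hni.trans_le (hiS m hm).1⟩, rfl⟩
  refine ⟨seg (n + 1) R, ⟨n + 1, R, hR, le_rfl, fun m hm => ⟨(hR' m hm).2, (hR' m hm).2⟩, rfl⟩, ?_⟩
  rintro _ ⟨c, T, -, -, -, rfl⟩ hxw hzw
  exact seg_subset_seg_iff.2
    ⟨(seg_subset_seg_iff.1 hzw).1, by have := (seg_subset_seg_iff.1 hxw).2; omega⟩

end QT

/-- The poset `Q = ℕ × {0,1}` (with `(m,i) < (n,j)` iff `m > n` and `i < j`) is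
well-founded, and some join-subsemilattice `P` of `I_{<ω}(Q)` has a strictly decreasing
infinite sequence of completely meet-irreducible ideals, so `Δ(J(P))` is not well-founded. -/
theorem bipartite_counterexample :
    (∀ a b : QT, a < b ↔ ((b : ℕ × Bool).1 < (a : ℕ × Bool).1 ∧
        (a : ℕ × Bool).2 = false ∧ (b : ℕ × Bool).2 = true)) ∧
    WellFounded ((· < ·) : QT → QT → Prop) ∧
    ∃ P : Set (Set QT), P ⊆ FinGenInit QT ∧ (∀ X ∈ P, ∀ Y ∈ P, X ∪ Y ∈ P) ∧
      ∃ I : ℕ → Set (Set QT), (∀ n, CMIdealIn P (I n)) ∧ ∀ n, I (n + 1) ⊂ I n :=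
  ⟨QT.lt_iff, QT.wellFounded_lt, QT.segs 0 0, QT.segs_subset_finGenInit 0 0,
    fun _ hX _ hY => QT.union_mem_segs hX hY, fun n => QT.segs (n + 1) (n + 1),
    QT.cmIdealIn_segs_succ, fun n => QT.segs_ssubset (by omega) (by omega) (by omega)⟩
end

section
/- Let Q be a poset, let ℱ be a subset of I_{<ω}(Q), and let P := ℱ^{<ω} be ordered by inclusion. If I is a completely meet-irreducible ideal of P, then there exists x ∈ Q such that I = {F ∈ P : x ∉ F}. -/
open Set

/-!
Pick `G ∈ J \ I`, where `J` is the cover of `I`. As `G` is the down-closure of a finite set and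
`I` is directed, if every generator of `G` lay in some member of `I` then `G` would lie below a
member of `I`, hence in `I`; so some `x ∈ G` lies in no member of `I`. Conversely, if `F ∈ P`
misses `x` but `F ∉ I`, the ideal generated by `I` and `F` strictly contains `I`, so it contains
`G`, i.e. `G ⊆ F ∪ F'` with `F' ∈ I`, which fails at `x`.
-/

section FinGenInit

variable {Q : Type*} [Preorder Q]

lemma isLowerSet_of_mem_finGenInit_s14 {G : Set Q} (hG : G ∈ FinGenInit Q) : IsLowerSet G := by
  obtain ⟨E, rfl⟩ := hG
  rintro a b hba ⟨y, hy, hay⟩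
  exact ⟨y, hy, hba.trans hay⟩

lemma empty_mem_finGenInit : (∅ : Set Q) ∈ FinGenInit Q :=
  ⟨∅, by simp⟩

lemma union_mem_finGenInit {A B : Set Q} (hA : A ∈ FinGenInit Q) (hB : B ∈ FinGenInit Q) :
    A ∪ B ∈ FinGenInit Q := by
  classical
  obtain ⟨EA, rfl⟩ := hA
  obtain ⟨EB, rfl⟩ := hB
  refine ⟨EA ∪ EB, ?_⟩
  ext x
  simp only [mem_union, mem_ofPred_eq, Finset.mem_union, or_and_right, exists_or]

end FinGenInit

section finUnions

variable {α : Type*}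

lemma union_mem_finUnions {ℱ : Set (Set α)} {A B : Set α} (hA : A ∈ finUnions ℱ)
    (hB : B ∈ finUnions ℱ) : A ∪ B ∈ finUnions ℱ := by
  classical
  obtain ⟨GA, hGA, rfl⟩ := hA
  obtain ⟨GB, hGB, rfl⟩ := hB
  exact ⟨GA ∪ GB, by simpa using union_subset hGA hGB, by rw [Finset.coe_union, sUnion_union]⟩

lemma finUnions_subset {ℱ 𝒮 : Set (Set α)} (hℱ : ℱ ⊆ 𝒮) (h_empty : ∅ ∈ 𝒮)
    (h_union : ∀ A ∈ 𝒮, ∀ B ∈ 𝒮, A ∪ B ∈ 𝒮) : finUnions ℱ ⊆ 𝒮 := by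
  classical
  rintro _ ⟨G, hG, rfl⟩
  induction G using Finset.induction_on with
  | empty => simpa using h_empty
  | insert S G _ ih =>
    rw [Finset.coe_insert, insert_subset_iff] at hG
    rw [Finset.coe_insert, sUnion_insert]
    exact h_union _ (hℱ hG.1) _ (ih hG.2)

lemma finUnions_subset_finGenInit {Q : Type*} [Preorder Q] {ℱ : Set (Set Q)}
    (hℱ : ℱ ⊆ FinGenInit Q) : finUnions ℱ ⊆ FinGenInit Q :=
  finUnions_subset hℱ empty_mem_finGenInit fun _ hA _ hB => union_mem_finGenInit hA hB

end finUnions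

section Ideals

variable {α : Type*} {P I : Set (Set α)}

def idealSupPrincipal (P I : Set (Set α)) (F : Set α) : Set (Set α) :=
  {H ∈ P | ∃ F' ∈ I, H ⊆ F ∪ F'}

lemma IsIdealIn.isIdealIn_idealSupPrincipal (hI : IsIdealIn P I)
    (hP : ∀ A ∈ P, ∀ B ∈ P, A ∪ B ∈ P) {F : Set α} (hF : F ∈ P) :
    IsIdealIn P (idealSupPrincipal P I F) := by
  obtain ⟨hIP, ⟨F₀, hF₀⟩, hIdir, -⟩ := hI
  refine ⟨fun H hH => hH.1, ⟨F, hF, F₀, hF₀, subset_union_left⟩, ?_, ?_⟩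
  · rintro H₁ ⟨-, F₁, hF₁, hH₁⟩ H₂ ⟨-, F₂, hF₂, hH₂⟩
    obtain ⟨F₃, hF₃, h₁₃, h₂₃⟩ := hIdir F₁ hF₁ F₂ hF₂
    exact ⟨F ∪ F₃, ⟨hP _ hF _ (hIP hF₃), F₃, hF₃, subset_rfl⟩,
      hH₁.trans (union_subset_union_right F h₁₃), hH₂.trans (union_subset_union_right F h₂₃)⟩
  · rintro H₁ hH₁ H₂ ⟨-, F₂, hF₂, hH₂⟩ h₁₂
    exact ⟨hH₁, F₂, hF₂, h₁₂.trans hH₂⟩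

lemma IsIdealIn.ssubset_idealSupPrincipal (hI : IsIdealIn P I) {F : Set α} (hF : F ∈ P)
    (hFI : F ∉ I) : I ⊂ idealSupPrincipal P I F := by
  obtain ⟨hIP, ⟨F₀, hF₀⟩, -, -⟩ := hI
  have hsub : I ⊆ idealSupPrincipal P I F := fun H hH => ⟨hIP hH, H, hH, subset_union_right⟩
  exact (ssubset_iff_of_subset hsub).2 ⟨F, ⟨hF, F₀, hF₀, subset_union_left⟩, hFI⟩

lemma IsIdealIn.exists_mem_forall_not_mem {Q : Type*} [Preorder Q] {P I : Set (Set Q)}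
    (hI : IsIdealIn P I) (hP : ∀ H ∈ P, IsLowerSet H) {G : Set Q} (hG : G ∈ FinGenInit Q)
    (hGP : G ∈ P) (hGI : G ∉ I) : ∃ x ∈ G, ∀ F ∈ I, x ∉ F := by
  obtain ⟨E, rfl⟩ := hG
  by_contra! hcover
  have hE : (E : Set Q) ⊆ ⋃₀ I := fun y hy => hcover y ⟨y, hy, le_rfl⟩
  obtain ⟨H, hH, hEH⟩ :=
    DirectedOn.exists_mem_subset_of_finite_of_subset_sUnion hI.2.1 hI.2.2.1 E.finite_toSet hE
  have hGH : {x | ∃ y ∈ E, x ≤ y} ⊆ H := fun x ⟨y, hy, hxy⟩ => hP H (hI.1 hH) hxy (hEH hy)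
  exact hGI (hI.2.2.2 _ hGP H hH hGH)

end Ideals

/-- For `ℱ ⊆ I_{<ω}(Q)` and `P := ℱ^{<ω}`, every completely meet-irreducible
ideal of `P` is of the form `{F ∈ P : x ∉ F}` for some `x ∈ Q`. -/
theorem cmIdeal_eq_not_mem {Q : Type*} [PartialOrder Q] (ℱ : Set (Set Q))
    (hℱ : ℱ ⊆ FinGenInit Q) (I : Set (Set Q)) (hI : CMIdealIn (finUnions ℱ) I) :
    ∃ x : Q, I = {F ∈ finUnions ℱ | x ∉ F} := by
  obtain ⟨hIideal, J, hJ, hIJ, hcover⟩ : IsIdealIn _ I ∧ _ := hI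
  have hPgen := finUnions_subset_finGenInit hℱ
  obtain ⟨G, hGJ, hGI⟩ := exists_of_ssubset hIJ
  obtain ⟨x, hxG, hxI⟩ := hIideal.exists_mem_forall_not_mem
    (fun H hH => isLowerSet_of_mem_finGenInit_s14 (hPgen hH)) (hPgen (hJ.1 hGJ)) (hJ.1 hGJ) hGI
  refine ⟨x, Set.ext fun F => ⟨fun hF => ⟨hIideal.1 hF, hxI F hF⟩, fun ⟨hFP, hxF⟩ => ?_⟩⟩
  by_contra hFI
  have hK := hIideal.isIdealIn_idealSupPrincipal (fun _ hA _ hB => union_mem_finUnions hA hB) hFP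
  obtain ⟨-, F', hF'I, hGF⟩ := hcover _ hK (hIideal.ssubset_idealSupPrincipal hFP hFI) hGJ
  exact (hGF hxG).elim hxF (hxI F' hF'I)
end

section
/- Let ⊑ be a linear order on ℕ, and let P be the poset on ℕ defined by x ≤ y iff x ≤ y in the natural order on ℕ and x ⊑ y. Suppose that P is a join-semilattice with respect to this order, and suppose there is an initial segment S of (ℕ, ⊑) with S ≠ ℕ such that infinitely many distinct nonempty initial segments of (ℕ, ⊑) having no greatest element are contained in S. Then P does not embed into [ω]^{<ω} as a join-subsemilattice. -/
open Set

/-! Fix `s ∉ S` and write `B T = ⋃ t ∈ T, f t`. A nonempty initial segment `T` of `⊑` without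
greatest element is directed in `P`, so `B T` is a directed union, and an injective
join-homomorphism cannot map any `x ∉ T` into it; hence `T ⊊ T'` forces `B T ⊊ B T'`. If moreover
`T' ⊆ S`, every `t' ∈ T'` lies below `s ⊔ t` for a large enough `t ∈ T`, so
`B T' ⊆ f s ∪ B T`. Thus `T ↦ f s ∩ B T` is injective on the infinitely many such segments inside
`S`, although it only takes the finitely many values `A ⊆ f s`. -/

section TotalRelation

variable {α : Type*} {r : α → α → Prop}

theorem exists_greatest_of_finite [Std.Total r] [IsTrans α r] {s : Set α} (hs : s.Finite)
    (hne : s.Nonempty) : ∃ g ∈ s, ∀ t ∈ s, r t g := by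
  have : Nonempty s := hne.to_subtype
  have hdir : Directed r ((↑) : s → α) := fun a b =>
    (total_of r a b).elim (fun h => ⟨b, h, refl_of r _⟩) (fun h => ⟨a, refl_of r _, h⟩)
  obtain ⟨g, hg⟩ := hdir.finite_set_le (s := univ) (finite_univ_iff.mpr hs.to_subtype)
  exact ⟨g, g.2, fun t ht => hg ⟨t, ht⟩ trivial⟩

theorem infinite_of_not_exists_greatest [Std.Total r] [IsTrans α r] {s : Set α}
    (hne : s.Nonempty) (h : ¬ ∃ g ∈ s, ∀ t ∈ s, r t g) : s.Infinite :=
  fun hs => h (exists_greatest_of_finite hs hne)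

variable (r) in
def IsInitialSegment (T : Set α) : Prop :=
  ∀ a b, r a b → b ∈ T → a ∈ T

theorem IsInitialSegment.subset_or_subset [Std.Total r] {T T' : Set α}
    (hT : IsInitialSegment r T) (hT' : IsInitialSegment r T') : T ⊆ T' ∨ T' ⊆ T := by
  by_contra! h
  obtain ⟨⟨a, haT, haT'⟩, ⟨b, hbT', hbT⟩⟩ := And.imp not_subset.mp not_subset.mp h
  rcases total_of r a b with hab | hba
  · exact haT' (hT' a b hab hbT')
  · exact hbT (hT b a hba haT)

end TotalRelation

namespace Sierpinskisation

variable {α β : Type*} [LinearOrder α] [DecidableEq β] (r : α → α → Prop)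

def le (x y : α) : Prop := x ≤ y ∧ r x y

def IsJoin (x y z : α) : Prop := le r x z ∧ le r y z ∧ ∀ w, le r x w → le r y w → le r z w

def IsJoinHom (f : α → Finset β) : Prop := ∀ x y z, IsJoin r x y z → f z = f x ∪ f y

def nonprincipalSegmentsIn (S : Set α) : Set (Set α) :=
  {T | IsInitialSegment r T ∧ T.Nonempty ∧ (¬ ∃ g ∈ T, ∀ t ∈ T, r t g) ∧ T ⊆ S}

variable {r}

theorem directedOn_le [LocallyFiniteOrderBot α] [Std.Total r] [IsTrans α r] {T : Set α}
    (hT : ¬ ∃ g ∈ T, ∀ t ∈ T, r t g) : DirectedOn (le r) T := by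
  intro x hx y hy
  set U := {w ∈ T | r x w ∧ r y w}
  have hUne : U.Nonempty := by
    rcases total_of r x y with hxy | hyx
    · exact ⟨y, hy, hxy, refl_of r y⟩
    · exact ⟨x, hx, refl_of r x, hyx⟩
  have hU : ¬ ∃ g ∈ U, ∀ t ∈ U, r t g := by
    rintro ⟨g, ⟨hgT, hxg, hyg⟩, hg⟩
    refine hT ⟨g, hgT, fun t ht => (total_of r t g).elim id fun hgt => ?_⟩
    exact hg t ⟨ht, trans_of r hxg hgt, trans_of r hyg hgt⟩
  obtain ⟨w, ⟨hwT, hxw, hyw⟩, hw⟩ := (infinite_of_not_exists_greatest hUne hU).exists_gt (max x y)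
  exact ⟨w, hwT, ⟨(le_max_left x y).trans hw.le, hxw⟩, ⟨(le_max_right x y).trans hw.le, hyw⟩⟩

namespace IsJoinHom

variable {f : α → Finset β} (hf : IsJoinHom r f)
include hf

theorem mono [Std.Refl r] {x y : α} (hxy : le r x y) : f x ⊆ f y := by
  rw [hf x y y ⟨hxy, ⟨le_rfl, refl_of r y⟩, fun _ _ h => h⟩]
  exact Finset.subset_union_left

theorem le_of_subset (hinj : Function.Injective f) {x y z : α} (hz : IsJoin r x y z)
    (hxy : f x ⊆ f y) : le r x y := by
  have : z = y := hinj (by rw [hf x y z hz, Finset.union_eq_right.mpr hxy])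
  exact this ▸ hz.1

theorem not_subset_biUnion [Std.Refl r] (hinj : Function.Injective f)
    (hjoin : ∀ x y, ∃ z, IsJoin r x y z) {T : Set α} (hT : IsInitialSegment r T)
    (hne : T.Nonempty) (hdir : DirectedOn (le r) T) {x : α} (hx : x ∉ T) :
    ¬ (f x : Set β) ⊆ ⋃ t ∈ T, (f t : Set β) := by
  intro hsub
  obtain ⟨t, ht, hxt⟩ := (hdir.mono fun _ _ h => Finset.coe_subset.mpr (hf.mono h))
    |>.exists_mem_subset_of_finset_subset_biUnion hne hsub
  obtain ⟨z, hz⟩ := hjoin x t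
  exact hx (hT x t (hf.le_of_subset hinj hz (Finset.coe_subset.mp hxt)).2 ht)

-- the join of `s` with a large element of `T` lies above all of `S`, hence above `T'`
theorem biUnion_subset_union [Std.Total r] [IsTrans α r] [LocallyFiniteOrderBot α]
    (hjoin : ∀ x y, ∃ z, IsJoin r x y z) {S T T' : Set α} {s : α} (hS : IsInitialSegment r S)
    (hs : s ∉ S) (hT : T.Infinite) (hT' : T' ⊆ S) :
    ⋃ t ∈ T', (f t : Set β) ⊆ (f s : Set β) ∪ ⋃ t ∈ T, (f t : Set β) := by
  simp only [iUnion_subset_iff]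
  intro t' ht' n hn
  obtain ⟨t, ht, ht't⟩ := hT.exists_gt t'
  obtain ⟨z, hz⟩ := hjoin s t
  have hzS : z ∉ S := fun h => hs (hS s z hz.1.2 h)
  have ht'z : r t' z := (total_of r t' z).resolve_right fun h => hzS (hS z t' h (hT' ht'))
  have hnz : n ∈ f z := hf.mono ⟨ht't.le.trans hz.2.1.1, ht'z⟩ hn
  rw [hf s t z hz, Finset.mem_union] at hnz
  exact hnz.imp id fun h => mem_biUnion ht h

theorem inter_biUnion_ne_of_ssubset [Std.Total r] [IsTrans α r] [LocallyFiniteOrderBot α]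
    (hinj : Function.Injective f) (hjoin : ∀ x y, ∃ z, IsJoin r x y z) {S : Set α} {s : α}
    (hS : IsInitialSegment r S) (hs : s ∉ S) {T T' : Set α} (hT : T ∈ nonprincipalSegmentsIn r S)
    (hT' : T' ∈ nonprincipalSegmentsIn r S) (hTT' : T ⊂ T') :
    (f s : Set β) ∩ ⋃ t ∈ T, (f t : Set β) ≠ (f s : Set β) ∩ ⋃ t ∈ T', (f t : Set β) := by
  obtain ⟨hTinit, hTne, hTmax, -⟩ := hT
  obtain ⟨x, hxT', hxT⟩ := exists_of_ssubset hTT'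
  obtain ⟨n, hnx, hnT⟩ := not_subset.mp
    (hf.not_subset_biUnion hinj hjoin hTinit hTne (directedOn_le hTmax) hxT)
  have hnT' : n ∈ ⋃ t ∈ T', (f t : Set β) := mem_biUnion hxT' hnx
  have hns : n ∈ (f s : Set β) :=
    (hf.biUnion_subset_union hjoin hS hs (infinite_of_not_exists_greatest hTne hTmax)
      hT'.2.2.2 hnT').resolve_right hnT
  intro heq
  exact hnT (heq ▸ mem_inter hns hnT').2

theorem injOn_inter_biUnion [Std.Total r] [IsTrans α r] [LocallyFiniteOrderBot α]
    (hinj : Function.Injective f) (hjoin : ∀ x y, ∃ z, IsJoin r x y z) {S : Set α} {s : α}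
    (hS : IsInitialSegment r S) (hs : s ∉ S) :
    InjOn (fun T => (f s : Set β) ∩ ⋃ t ∈ T, (f t : Set β)) (nonprincipalSegmentsIn r S) := by
  intro T hT T' hT' heq
  by_contra hne
  rcases hT.1.subset_or_subset hT'.1 with h | h
  · exact hf.inter_biUnion_ne_of_ssubset hinj hjoin hS hs hT hT' (h.ssubset_of_ne hne) heq
  · exact hf.inter_biUnion_ne_of_ssubset hinj hjoin hS hs hT' hT (h.ssubset_of_ne (Ne.symm hne))
      heq.symm

end IsJoinHom

end Sierpinskisation

open Sierpinskisation in
/-- Let `⊑` (here `r`) be a linear order on `ℕ` and let `P` be `ℕ` ordered by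
`x ≤ y` iff `x ≤ y` in the natural order and `x ⊑ y`. Suppose `P` is a join-semilattice and
some proper initial segment `S` of `(ℕ,⊑)` contains infinitely many distinct nonempty initial
segments of `(ℕ,⊑)` without greatest element. Then `P` does not embed into `[ω]^{<ω}` as a
join-subsemilattice. -/
theorem sierpinskisation_not_embeds (r : ℕ → ℕ → Prop) (hr : IsLinearOrder ℕ r)
    (hjoin : ∀ x y : ℕ, ∃ z : ℕ, (x ≤ z ∧ r x z) ∧ (y ≤ z ∧ r y z) ∧
      ∀ w : ℕ, (x ≤ w ∧ r x w) → (y ≤ w ∧ r y w) → (z ≤ w ∧ r z w))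
    (S : Set ℕ) (hS : ∀ a b : ℕ, r a b → b ∈ S → a ∈ S) (hSne : S ≠ Set.univ)
    (hinf : {T : Set ℕ | (∀ a b : ℕ, r a b → b ∈ T → a ∈ T) ∧ T.Nonempty ∧
      (¬ ∃ g ∈ T, ∀ t ∈ T, r t g) ∧ T ⊆ S}.Infinite) :
    ¬ ∃ f : ℕ → Finset ℕ, Function.Injective f ∧
        ∀ x y z : ℕ, ((x ≤ z ∧ r x z) ∧ (y ≤ z ∧ r y z) ∧
            ∀ w : ℕ, (x ≤ w ∧ r x w) → (y ≤ w ∧ r y w) → (z ≤ w ∧ r z w)) →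
          f z = f x ∪ f y := by
  rintro ⟨f, hinj, hf⟩
  have := hr
  obtain ⟨s, hs⟩ := (ne_univ_iff_exists_notMem S).mp hSne
  have htrace := IsJoinHom.injOn_inter_biUnion (r := r) (f := f) hf hinj hjoin hS hs
  refine hinf (Finite.of_finite_image ((f s).finite_toSet.finite_subsets.subset ?_) htrace)
  rintro _ ⟨T, -, rfl⟩
  exact inter_subset_left
end
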